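/- Let E be a homogeneous Moran set determined by a collection of closed intervals fulfilling the homogeneous Moran structure for the sequences {n_k} and {c_k}. If sup_{k≥1} n_k < +∞, then dim_L E ≤ liminf_{l→∞} inf_{k≥1} ( log(n_{k+1}n_{k+2}⋯n_{k+l}) / (−log(c_{k+1}c_{k+2}⋯c_{k+l})) ). -/

import Mathlib

open Metric Filter Set
open scoped ENNReal

/-- `coveringNumber r A` is the smallest number of balls of radius `r`
needed to cover `A` (as an extended nonnegative real, `⊤` if no finite cover exists). -/
noncomputable def coveringNumber {X : Type*} [MetricSpace X] (r : ℝ) (A : Set X) : ℝ≥0∞ :=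
  sInf {m : ℝ≥0∞ | ∃ S : Finset X, (S.card : ℝ≥0∞) = m ∧ A ⊆ ⋃ y ∈ S, Metric.ball y r}

/-- The lower dimension of a set `F` in a metric space. -/
noncomputable def lowerDim {X : Type*} [MetricSpace X] (F : Set X) : ℝ :=
  sSup {s : ℝ | 0 ≤ s ∧ ∃ b > (0 : ℝ), ∃ C > (0 : ℝ), ∀ r R : ℝ, 0 < r → r < R → R < b →
    ∀ x ∈ F, ENNReal.ofReal (C * (R / r) ^ s) ≤ coveringNumber r (Metric.ball x R ∩ F)}

/-- A word `σ = σ₁σ₂⋯σₖ ∈ Ωₖ`: its `j`-th letter (0-indexed `j`) satisfies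
`1 ≤ σⱼ₊₁ ≤ n (j+1)`. -/
def MoranWord (n : ℕ → ℕ) (σ : List ℕ) : Prop :=
  ∀ j, j < σ.length → 1 ≤ σ.getD j 0 ∧ σ.getD j 0 ≤ n (j + 1)

/-- A collection of closed intervals of `[0,1]` fulfilling the homogeneous Moran
structure for the sequences `{nₖ}` and `{cₖ}`. -/
structure HomMoranStructure (n : ℕ → ℕ) (c : ℕ → ℝ) where
  I : List ℕ → Set ℝ
  root : I [] = Set.Icc 0 1
  isClosedInterval : ∀ σ, MoranWord n σ → ∃ x y : ℝ, x ≤ y ∧ I σ = Set.Icc x y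
  subset : ∀ σ, MoranWord n σ → ∀ i, 1 ≤ i → i ≤ n (σ.length + 1) → I (σ ++ [i]) ⊆ I σ
  disj : ∀ σ, MoranWord n σ → ∀ i₁ i₂, 1 ≤ i₁ → i₁ < i₂ → i₂ ≤ n (σ.length + 1) →
    interior (I (σ ++ [i₁])) ∩ interior (I (σ ++ [i₂])) = ∅
  ratio : ∀ σ, MoranWord n σ → ∀ i, 1 ≤ i → i ≤ n (σ.length + 1) →
    Metric.diam (I (σ ++ [i])) = c (σ.length + 1) * Metric.diam (I σ)

/-- The homogeneous Moran set `E = ⋂_{k≥1} ⋃_{σ∈Ωₖ} I_σ` determined by a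
homogeneous Moran structure. -/
def moranSet {n : ℕ → ℕ} {c : ℕ → ℝ} (S : HomMoranStructure n c) : Set ℝ :=
  ⋂ k : ℕ, ⋃ σ : List ℕ, ⋃ _ : MoranWord n σ ∧ σ.length = k + 1, S.I σ

/-- `moranDelta c k = c₁c₂⋯cₖ`, with `moranDelta c 0 = 1`. -/
noncomputable def moranDelta (c : ℕ → ℝ) (k : ℕ) : ℝ :=
  ∏ i ∈ Finset.Icc 1 k, c i

/-- `moranRatio n c k l = log(n_{k+1}⋯n_{k+l}) / (−log(c_{k+1}⋯c_{k+l}))`. -/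
noncomputable def moranRatio (n : ℕ → ℕ) (c : ℕ → ℝ) (k l : ℕ) : ℝ :=
  Real.log (∏ i ∈ Finset.Icc (k + 1) (k + l), (n i : ℝ)) /
    (-Real.log (∏ i ∈ Finset.Icc (k + 1) (k + l), c i))


namespace MoranAux

variable {n : ℕ → ℕ} {c : ℕ → ℝ}

lemma moranWord_take {σ : List ℕ} (h : MoranWord n σ) (k : ℕ) :
    MoranWord n (σ.take k) := by
  intro j hj
  have hjσ : j < σ.length := by
    have := hj; rw [List.length_take] at this; omega
  have : (σ.take k).getD j 0 = σ.getD j 0 := by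
    rw [List.getD_eq_getElem _ _ hj, List.getD_eq_getElem _ _ hjσ, List.getElem_take]
  rw [this]; exact h j hjσ

lemma moranWord_concat_iff {σ : List ℕ} {i : ℕ} :
    MoranWord n (σ ++ [i]) ↔ MoranWord n σ ∧ 1 ≤ i ∧ i ≤ n (σ.length + 1) := by
  have hlen : (σ ++ [i]).length = σ.length + 1 := by simp
  have hgetlast : (σ ++ [i]).getD σ.length 0 = i := by
    rw [List.getD_eq_getElem _ _ (by simp)]
    exact List.getElem_concat_length rfl _
  constructor
  · intro h
    refine ⟨fun j hj => ?_, ?_, ?_⟩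
    · have := h j (by rw [hlen]; omega)
      rwa [List.getD_append _ _ _ _ hj] at this
    · have := (h σ.length (by omega)).1; rwa [hgetlast] at this
    · have := (h σ.length (by omega)).2; rwa [hgetlast] at this
  · rintro ⟨h, h1, h2⟩ j hj
    rw [hlen] at hj
    rcases Nat.lt_or_ge j σ.length with hj' | hj'
    · rw [List.getD_append _ _ _ _ hj']; exact h j hj'
    · have : j = σ.length := by omega
      subst this; rw [hgetlast]; exact ⟨h1, h2⟩

lemma moranDelta_succ (c : ℕ → ℝ) (k : ℕ) :
    moranDelta c (k + 1) = moranDelta c k * c (k + 1) :=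
  Finset.prod_Icc_succ_top (by omega) c

lemma moranDelta_pos (hc : ∀ k, 1 ≤ k → 0 < c k) (k : ℕ) : 0 < moranDelta c k :=
  Finset.prod_pos fun i hi => hc i (Finset.mem_Icc.mp hi).1

variable (S : HomMoranStructure n c)

lemma diam_I (σ : List ℕ) (h : MoranWord n σ) :
    Metric.diam (S.I σ) = moranDelta c σ.length := by
  induction σ using List.reverseRecOn with
  | nil => simp [S.root, Real.diam_Icc (by norm_num : (0:ℝ) ≤ 1), moranDelta]
  | append_singleton σ i ih =>
    rw [moranWord_concat_iff] at h
    obtain ⟨hσ, h1, h2⟩ := h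
    rw [S.ratio σ hσ i h1 h2, ih hσ]
    simp only [List.length_append, List.length_singleton]
    rw [moranDelta_succ, mul_comm]

lemma I_eq_Icc (σ : List ℕ) (h : MoranWord n σ) :
    S.I σ = Set.Icc (sInf (S.I σ)) (sInf (S.I σ) + moranDelta c σ.length) := by
  obtain ⟨x, y, hxy, hI⟩ := S.isClosedInterval σ h
  have hd : Metric.diam (S.I σ) = moranDelta c σ.length := diam_I S σ h
  rw [hI, Real.diam_Icc hxy] at hd
  rw [hI, csInf_Icc hxy, ← hd]
  ring_nf

lemma I_subset_take (σ : List ℕ) (h : MoranWord n σ) (k : ℕ) :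
    S.I σ ⊆ S.I (σ.take k) := by
  induction σ using List.reverseRecOn with
  | nil => simp
  | append_singleton σ i ih =>
    rcases Nat.lt_or_ge σ.length k with hk | hk
    · have : (σ ++ [i]).take k = σ ++ [i] := by
        apply List.take_of_length_le; simp; omega
      rw [this]
    · rw [List.take_append_of_le_length hk]
      rw [moranWord_concat_iff] at h
      obtain ⟨hσ, h1, h2⟩ := h
      exact (S.subset σ hσ i h1 h2).trans (ih hσ)

lemma interior_disjoint : ∀ (σ τ : List ℕ), MoranWord n σ → MoranWord n τ →
    σ.length = τ.length → σ ≠ τ → interior (S.I σ) ∩ interior (S.I τ) = ∅ := by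
  intro σ
  induction σ using List.reverseRecOn with
  | nil =>
    intro τ _ _ hlen hne
    exact absurd (List.eq_nil_of_length_eq_zero hlen.symm).symm hne
  | append_singleton σ i ih =>
    intro τ hσw hτw hlen hne
    induction τ using List.reverseRecOn with
    | nil => simp at hlen
    | append_singleton τ j _ =>
      have hlen' : σ.length = τ.length := by simp at hlen; omega
      rw [moranWord_concat_iff] at hσw hτw
      obtain ⟨hσ, hi1, hi2⟩ := hσw
      obtain ⟨hτ, hj1, hj2⟩ := hτw
      rcases eq_or_ne σ τ with rfl | hστ
      · have hij : i ≠ j := by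
          intro h; exact hne (by rw [h])
        rcases hij.lt_or_gt with h | h
        · exact S.disj σ hσ i j hi1 h hj2
        · rw [Set.inter_comm]; exact S.disj σ hσ j i hj1 h (by rw [hlen']; exact hi2)
      · have hd := ih τ hσ hτ hlen' hστ
        have h1 : interior (S.I (σ ++ [i])) ⊆ interior (S.I σ) :=
          interior_mono (S.subset σ hσ i hi1 hi2)
        have h2 : interior (S.I (τ ++ [j])) ⊆ interior (S.I τ) :=
          interior_mono (S.subset τ hτ j hj1 hj2)
        exact Set.eq_empty_of_subset_empty ((Set.inter_subset_inter h1 h2).trans hd.le)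

end MoranAux

namespace MoranAux

/-- Finset of lists of length `l` whose `j`-th letter lies in `[1, n (m+j+1)]`. -/
def wordsOn (n : ℕ → ℕ) : ℕ → ℕ → Finset (List ℕ)
  | _, 0 => {[]}
  | m, l + 1 =>
    (Finset.Icc 1 (n (m + 1)) ×ˢ wordsOn n (m + 1) l).image (fun p => p.1 :: p.2)

lemma mem_wordsOn {n : ℕ → ℕ} :
    ∀ (l m : ℕ) (σ : List ℕ), σ ∈ wordsOn n m l ↔
      σ.length = l ∧ ∀ j < l, 1 ≤ σ.getD j 0 ∧ σ.getD j 0 ≤ n (m + j + 1) := by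
  intro l
  induction l with
  | zero =>
    intro m σ
    simp only [wordsOn, Finset.mem_singleton]
    constructor
    · rintro rfl; simp
    · rintro ⟨h, -⟩; exact List.eq_nil_of_length_eq_zero h
  | succ l ih =>
    intro m σ
    simp only [wordsOn, Finset.mem_image, Finset.mem_product, Finset.mem_Icc, Prod.exists]
    constructor
    · rintro ⟨a, τ, ⟨⟨ha1, ha2⟩, hτ⟩, rfl⟩
      obtain ⟨hlen, hmem⟩ := (ih (m + 1) τ).mp hτ
      refine ⟨by simp [hlen], fun j hj => ?_⟩
      cases j with
      | zero => simpa using ⟨ha1, ha2⟩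
      | succ j =>
        have := hmem j (by omega)
        simpa [Nat.add_assoc, Nat.add_comm 1 j, Nat.add_left_comm] using this
    · rintro ⟨hlen, hmem⟩
      cases σ with
      | nil => simp at hlen
      | cons a τ =>
        have h0 := hmem 0 (by omega)
        simp only [List.getD_cons_zero] at h0
        refine ⟨a, τ, ⟨h0, (ih (m + 1) τ).mpr ⟨by simpa using hlen, fun j hj => ?_⟩⟩, rfl⟩
        have := hmem (j + 1) (by omega)
        simp only [List.getD_cons_succ] at this
        convert this using 3
        omega

lemma card_wordsOn (n : ℕ → ℕ) :
    ∀ l m, (wordsOn n m l).card = ∏ i ∈ Finset.Ioc m (m + l), n i := by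
  intro l
  induction l with
  | zero => intro m; simp [wordsOn]
  | succ l ih =>
    intro m
    have hinj : Function.Injective (fun p : ℕ × List ℕ => p.1 :: p.2) := by
      rintro ⟨a, τ⟩ ⟨b, ρ⟩ h
      simp only [List.cons.injEq] at h
      simp [h.1, h.2]
    rw [wordsOn, Finset.card_image_of_injective _ hinj, Finset.card_product,
      Nat.card_Icc, ih (m + 1)]
    have hsplit : (∏ i ∈ Finset.Ioc m (m + 1), n i) * ∏ i ∈ Finset.Ioc (m + 1) (m + (l + 1)), n i
        = ∏ i ∈ Finset.Ioc m (m + (l + 1)), n i :=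
      Finset.prod_Ioc_consecutive n (by omega) (by omega)
    rw [← hsplit]
    have h1 : Finset.Ioc m (m + 1) = {m + 1} := by
      ext x; simp only [Finset.mem_Ioc, Finset.mem_singleton]; omega
    rw [h1, Finset.prod_singleton]
    have : m + 1 + l = m + (l + 1) := by omega
    rw [this]
    simp

lemma moranWord_iff_wordsOn {n : ℕ → ℕ} {σ : List ℕ} {l : ℕ} :
    σ ∈ wordsOn n 0 l ↔ MoranWord n σ ∧ σ.length = l := by
  rw [mem_wordsOn]
  unfold MoranWord
  constructor
  · rintro ⟨hlen, h⟩
    exact ⟨fun j hj => by simpa using h j (by omega), hlen⟩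
  · rintro ⟨h, hlen⟩
    exact ⟨hlen, fun j hj => by simpa using h j (by omega)⟩

end MoranAux

namespace MoranAux

lemma ioo_meet {a₁ a₂ δ : ℝ} (_hδ : 0 < δ) (h : |a₁ - a₂| < δ) :
    ((Set.Ioo a₁ (a₁ + δ)) ∩ (Set.Ioo a₂ (a₂ + δ))).Nonempty := by
  rw [abs_lt] at h
  exact ⟨(a₁ + a₂ + δ) / 2, ⟨by linarith [h.1, h.2], by linarith⟩, by linarith, by linarith⟩

variable {n : ℕ → ℕ} {c : ℕ → ℝ}

open scoped Classical in
lemma card_meets_le_three (hc : ∀ k, 1 ≤ k → 0 < c k) (S : HomMoranStructure n c)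
    (k : ℕ) (x : ℝ) :
    ((wordsOn n 0 k).filter
      (fun τ => (S.I τ ∩ Metric.ball x (moranDelta c k)).Nonempty)).card ≤ 3 := by
  classical
  set δ := moranDelta c k with hδdef
  have δpos : 0 < δ := moranDelta_pos hc k
  have key : ∀ τ ∈ (wordsOn n 0 k).filter
      (fun τ => (S.I τ ∩ Metric.ball x δ).Nonempty),
      S.I τ = Set.Icc (sInf (S.I τ)) (sInf (S.I τ) + δ) ∧
      x - 2 * δ < sInf (S.I τ) ∧ sInf (S.I τ) < x + δ := by
    intro τ hτ
    rw [Finset.mem_filter] at hτ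
    obtain ⟨hw, hlen⟩ := moranWord_iff_wordsOn.mp hτ.1
    have hIcc := I_eq_Icc S τ hw
    rw [hlen] at hIcc
    obtain ⟨z, hz1, hz2⟩ := hτ.2
    rw [hIcc] at hz1
    rw [Metric.mem_ball, Real.dist_eq, abs_lt] at hz2
    exact ⟨hIcc, by constructor <;> [linarith [hz1.2, hz2.1]; linarith [hz1.1, hz2.2]]⟩
  apply Finset.card_le_card_of_injOn
    (f := fun τ => ⌊(sInf (S.I τ) - (x - 2 * δ)) / δ⌋₊) (t := Finset.range 3)
  · intro τ hτ
    obtain ⟨hIcc, ha1, ha2⟩ := key τ hτ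
    rw [Finset.mem_coe, Finset.mem_range]
    have harg : 0 ≤ (sInf (S.I τ) - (x - 2 * δ)) / δ :=
      div_nonneg (by linarith) δpos.le
    refine (Nat.floor_lt harg).mpr ?_
    rw [div_lt_iff₀ δpos]
    push_cast; linarith
  · intro τ₁ h₁ τ₂ h₂ heq
    by_contra hne
    obtain ⟨hIcc₁, hb₁, hb₂⟩ := key τ₁ h₁
    obtain ⟨hIcc₂, hb₃, hb₄⟩ := key τ₂ h₂
    set a₁ := sInf (S.I τ₁)
    set a₂ := sInf (S.I τ₂)
    set p₁ := (a₁ - (x - 2 * δ)) / δ with hp₁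
    set p₂ := (a₂ - (x - 2 * δ)) / δ with hp₂
    have e₁ : a₁ = p₁ * δ + (x - 2 * δ) := by rw [hp₁, div_mul_cancel₀ _ δpos.ne']; ring
    have e₂ : a₂ = p₂ * δ + (x - 2 * δ) := by rw [hp₂, div_mul_cancel₀ _ δpos.ne']; ring
    have hf₁ : (⌊p₁⌋₊ : ℝ) ≤ p₁ := Nat.floor_le (div_nonneg (by linarith) δpos.le)
    have hf₂ : (⌊p₂⌋₊ : ℝ) ≤ p₂ := Nat.floor_le (div_nonneg (by linarith) δpos.le)
    have hg₁ : p₁ < ⌊p₁⌋₊ + 1 := Nat.lt_floor_add_one p₁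
    have hg₂ : p₂ < ⌊p₂⌋₊ + 1 := Nat.lt_floor_add_one p₂
    have heq' : (⌊p₁⌋₊ : ℝ) = (⌊p₂⌋₊ : ℝ) := by exact_mod_cast congrArg Nat.cast heq
    have hdist : |a₁ - a₂| < δ := by
      rw [abs_lt]
      constructor <;> nlinarith [hg₁, hg₂, hf₁, hf₂]
    have hw₁ := (moranWord_iff_wordsOn.mp (Finset.mem_filter.mp h₁).1)
    have hw₂ := (moranWord_iff_wordsOn.mp (Finset.mem_filter.mp h₂).1)
    have hd := interior_disjoint S τ₁ τ₂ hw₁.1 hw₂.1 (hw₁.2.trans hw₂.2.symm) hne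
    rw [hIcc₁, hIcc₂, interior_Icc, interior_Icc] at hd
    obtain ⟨w, hw⟩ := ioo_meet δpos hdist
    rw [hd] at hw
    exact hw

end MoranAux

namespace MoranAux

variable {n : ℕ → ℕ} {c : ℕ → ℝ}

open scoped Classical in
lemma coveringNumber_le_bound (hc : ∀ k, 1 ≤ k → 0 < c k) (S : HomMoranStructure n c)
    (k l : ℕ) (hl : 1 ≤ l) (x : ℝ) :
    coveringNumber (moranDelta c (k + l)) (Metric.ball x (moranDelta c k) ∩ moranSet S)
      ≤ ((3 * ∏ i ∈ Finset.Ioc k (k + l), n i : ℕ) : ℝ≥0∞) := by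
  set δ := moranDelta c k with hδdef
  set δ' := moranDelta c (k + l) with hδ'def
  have δ'pos : 0 < δ' := moranDelta_pos hc _
  set T := (wordsOn n 0 (k + l)).filter
    (fun σ => (S.I σ ∩ Metric.ball x δ).Nonempty) with hT
  set centers := T.image (fun σ => sInf (S.I σ) + δ' / 2) with hcenters
  -- the covering property
  have hcover : Metric.ball x δ ∩ moranSet S ⊆ ⋃ y ∈ centers, Metric.ball y δ' := by
    rintro z ⟨hz1, hz2⟩
    have hz3 := Set.mem_iInter.mp hz2 (k + l - 1)
    rw [Set.mem_iUnion] at hz3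
    obtain ⟨σ, hz4⟩ := hz3
    rw [Set.mem_iUnion] at hz4
    obtain ⟨⟨hw, hlen⟩, hzI⟩ := hz4
    have hlen' : σ.length = k + l := by omega
    have hσT : σ ∈ T := by
      rw [hT, Finset.mem_filter]
      exact ⟨moranWord_iff_wordsOn.mpr ⟨hw, hlen'⟩, ⟨z, hzI, hz1⟩⟩
    rw [Set.mem_iUnion₂]
    refine ⟨sInf (S.I σ) + δ' / 2, Finset.mem_image_of_mem _ hσT, ?_⟩
    have hIcc := I_eq_Icc S σ hw
    rw [hlen'] at hIcc
    rw [hIcc] at hzI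
    rw [Metric.mem_ball, Real.dist_eq, abs_lt]
    exact ⟨by linarith [hzI.1], by linarith [hzI.2]⟩
  -- covering number at most the number of centers
  have h1 : coveringNumber δ' (Metric.ball x δ ∩ moranSet S) ≤ (centers.card : ℝ≥0∞) :=
    sInf_le ⟨centers, rfl, hcover⟩
  -- cardinality estimates
  have h2 : centers.card ≤ T.card := Finset.card_image_le
  have h3 : T.card ≤ (∏ i ∈ Finset.Ioc k (k + l), n i) * 3 := by
    have hbound : ∀ b ∈ T.image (fun σ => List.take k σ),
        (T.filter (fun σ => List.take k σ = b)).card ≤ ∏ i ∈ Finset.Ioc k (k + l), n i := by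
      intro b _
      rw [← card_wordsOn n l k]
      apply Finset.card_le_card_of_injOn (f := fun σ => List.drop k σ)
      · intro σ hσ
        rw [Finset.mem_coe, Finset.mem_filter, hT, Finset.mem_filter] at hσ; rw [Finset.mem_coe]
        obtain ⟨⟨hσw, -⟩, -⟩ := hσ
        rw [mem_wordsOn] at hσw ⊢
        obtain ⟨hσlen, hσmem⟩ := hσw
        refine ⟨by rw [List.length_drop, hσlen]; omega, fun j hj => ?_⟩
        have hkj : k + j < σ.length := by omega
        have : (List.drop k σ).getD j 0 = σ.getD (k + j) 0 := by
          rw [List.getD_eq_getElem _ _ (by rw [List.length_drop]; omega),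
            List.getD_eq_getElem _ _ hkj, List.getElem_drop]
        rw [this]
        have := hσmem (k + j) (by omega)
        simpa using this
      · intro σ₁ h₁ σ₂ h₂ heq
        simp only at heq
        rw [Finset.mem_coe, Finset.mem_filter] at h₁ h₂
        rw [← List.take_append_drop k σ₁, ← List.take_append_drop k σ₂, h₁.2, h₂.2, heq]
    have himg : (T.image (fun σ => List.take k σ)).card ≤ 3 := by
      have hsub : T.image (fun σ => List.take k σ) ⊆
          (wordsOn n 0 k).filter (fun τ => (S.I τ ∩ Metric.ball x δ).Nonempty) := by
        intro b hb
        rw [Finset.mem_image] at hb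
        obtain ⟨σ, hσ, rfl⟩ := hb
        rw [hT, Finset.mem_filter] at hσ
        obtain ⟨hσw, z, hzI, hzb⟩ := hσ
        obtain ⟨hw, hlen⟩ := moranWord_iff_wordsOn.mp hσw
        rw [Finset.mem_filter]
        refine ⟨moranWord_iff_wordsOn.mpr ⟨moranWord_take hw k, ?_⟩,
          ⟨z, I_subset_take S σ hw k hzI, hzb⟩⟩
        rw [List.length_take, hlen]; omega
      exact (Finset.card_le_card hsub).trans (card_meets_le_three hc S k x)
    calc T.card ≤ (∏ i ∈ Finset.Ioc k (k + l), n i) * (T.image (fun σ => List.take k σ)).card :=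
        Finset.card_le_mul_card_image T _ hbound
      _ ≤ (∏ i ∈ Finset.Ioc k (k + l), n i) * 3 := by
          exact Nat.mul_le_mul_left _ himg
  refine h1.trans ?_
  have : centers.card ≤ 3 * ∏ i ∈ Finset.Ioc k (k + l), n i := by omega
  exact_mod_cast Nat.cast_le.mpr this

end MoranAux

namespace MoranAux

noncomputable def Lg (n : ℕ → ℕ) (l k : ℕ) : ℝ :=
  ∑ i ∈ Finset.Ioc k (k + l), Real.log (n i)

noncomputable def Dg (c : ℕ → ℝ) (l k : ℕ) : ℝ :=
  ∑ i ∈ Finset.Ioc k (k + l), (-Real.log (c i))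

variable {n : ℕ → ℕ} {c : ℕ → ℝ}

lemma c_le_half (hn : ∀ k, 1 ≤ k → 2 ≤ n k) (hc : ∀ k, 1 ≤ k → 0 < c k)
    (hnc : ∀ k, 1 ≤ k → (n k : ℝ) * c k < 1) {k : ℕ} (hk : 1 ≤ k) : c k ≤ 1 / 2 := by
  have h1 := hnc k hk
  have h2 : (2 : ℝ) ≤ n k := by exact_mod_cast hn k hk
  have h3 := hc k hk
  nlinarith

lemma Lg_nonneg (hn : ∀ k, 1 ≤ k → 2 ≤ n k) (l k : ℕ) : 0 ≤ Lg n l k :=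
  Finset.sum_nonneg fun i hi => Real.log_nonneg
    (by exact_mod_cast le_trans (by omega) (hn i (by have := (Finset.mem_Ioc.mp hi).1; omega)))

lemma Lg_le (hn : ∀ k, 1 ≤ k → 2 ≤ n k) {M : ℕ} (hM : ∀ k, 1 ≤ k → n k ≤ M) (l k : ℕ) :
    Lg n l k ≤ (l : ℝ) * Real.log M := by
  have h := Finset.sum_le_card_nsmul (Finset.Ioc k (k + l))
    (fun i => Real.log (n i)) (Real.log M) (fun i hi => by
      have hi1 : 1 ≤ i := by have := (Finset.mem_Ioc.mp hi).1; omega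
      have h2 : (0:ℝ) < n i := by have := hn i hi1; positivity
      show Real.log (n i) ≤ Real.log M
      exact Real.log_le_log h2 (by exact_mod_cast hM i hi1))
  rw [Nat.card_Ioc, nsmul_eq_mul] at h
  have e : (k + l - k : ℕ) = l := by omega
  rw [e] at h
  exact h

lemma Dg_ge (hn : ∀ k, 1 ≤ k → 2 ≤ n k) (hc : ∀ k, 1 ≤ k → 0 < c k)
    (hnc : ∀ k, 1 ≤ k → (n k : ℝ) * c k < 1) (l k : ℕ) :
    (l : ℝ) * Real.log 2 ≤ Dg c l k := by
  have h := Finset.card_nsmul_le_sum (Finset.Ioc k (k + l))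
    (fun i => -Real.log (c i)) (Real.log 2) (fun i hi => by
      have hi1 : 1 ≤ i := by have := (Finset.mem_Ioc.mp hi).1; omega
      have h1 : Real.log (c i) ≤ Real.log (1 / 2) :=
        Real.log_le_log (hc i hi1) (c_le_half hn hc hnc hi1)
      rw [one_div, Real.log_inv] at h1
      show Real.log 2 ≤ -Real.log (c i)
      linarith)
  rw [Nat.card_Ioc, nsmul_eq_mul] at h
  have : (k + l - k : ℕ) = l := by omega
  rw [this] at h
  exact h

lemma Dg_nonneg (hn : ∀ k, 1 ≤ k → 2 ≤ n k) (hc : ∀ k, 1 ≤ k → 0 < c k)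
    (hnc : ∀ k, 1 ≤ k → (n k : ℝ) * c k < 1) (l k : ℕ) : 0 ≤ Dg c l k := by
  have := Dg_ge hn hc hnc l k
  have h2 : 0 ≤ (l : ℝ) * Real.log 2 := by positivity
  linarith

lemma Dg_pos (hn : ∀ k, 1 ≤ k → 2 ≤ n k) (hc : ∀ k, 1 ≤ k → 0 < c k)
    (hnc : ∀ k, 1 ≤ k → (n k : ℝ) * c k < 1) {l : ℕ} (hl : 1 ≤ l) (k : ℕ) :
    0 < Dg c l k := by
  have := Dg_ge hn hc hnc l k
  have h2 : 0 < (l : ℝ) * Real.log 2 := by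
    have : (0:ℝ) < l := by exact_mod_cast hl
    have := Real.log_pos (by norm_num : (1:ℝ) < 2)
    positivity
  linarith

lemma split_sum (g : ℕ → ℝ) {k K l : ℕ} (h1 : k ≤ K) (h2 : K ≤ k + l) :
    ∑ i ∈ Finset.Ioc k (k + l), g i =
      ∑ i ∈ Finset.Ioc k (k + (K - k)), g i + ∑ i ∈ Finset.Ioc K (K + (k + l - K)), g i := by
  have e1 : k + (K - k) = K := by omega
  have e2 : K + (k + l - K) = k + l := by omega
  rw [e1, e2, Finset.sum_Ioc_consecutive g h1 h2]

lemma Lg_split {k K l : ℕ} (h1 : k ≤ K) (h2 : K ≤ k + l) :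
    Lg n l k = Lg n (K - k) k + Lg n (k + l - K) K :=
  split_sum _ h1 h2

lemma Dg_split {k K l : ℕ} (h1 : k ≤ K) (h2 : K ≤ k + l) :
    Dg c l k = Dg c (K - k) k + Dg c (k + l - K) K :=
  split_sum _ h1 h2

lemma Dg_le_Dmax (hn : ∀ k, 1 ≤ k → 2 ≤ n k) (hc : ∀ k, 1 ≤ k → 0 < c k)
    (hnc : ∀ k, 1 ≤ k → (n k : ℝ) * c k < 1) {k K : ℕ} (h1 : k ≤ K) :
    Dg c (K - k) k ≤ Dg c K 0 := by
  unfold Dg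
  apply Finset.sum_le_sum_of_subset_of_nonneg
  · intro i hi
    rw [Finset.mem_Ioc] at hi ⊢
    omega
  · intro i hi _
    have hi1 : 1 ≤ i := by have := (Finset.mem_Ioc.mp hi).1; omega
    have h1 : Real.log (c i) ≤ Real.log (1 / 2) :=
      Real.log_le_log (hc i hi1) (c_le_half hn hc hnc hi1)
    rw [one_div, Real.log_inv] at h1
    have := Real.log_pos (by norm_num : (1:ℝ) < 2)
    linarith

lemma ratio_eq (hn : ∀ k, 1 ≤ k → 2 ≤ n k) (hc : ∀ k, 1 ≤ k → 0 < c k) (k l : ℕ) :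
    moranRatio n c k l = Lg n l k / Dg c l k := by
  unfold moranRatio
  have hIcc : Finset.Icc (k + 1) (k + l) = Finset.Ioc k (k + l) := by
    ext i; simp only [Finset.mem_Icc, Finset.mem_Ioc]; omega
  rw [hIcc,
    Real.log_prod (fun i hi => by
      have : 1 ≤ i := by have := (Finset.mem_Ioc.mp hi).1; omega
      have := hn i this
      positivity),
    Real.log_prod (fun i hi => by
      have : 1 ≤ i := by have := (Finset.mem_Ioc.mp hi).1; omega
      exact ne_of_gt (hc i this))]
  unfold Lg Dg
  rw [Finset.sum_neg_distrib]

lemma moranDelta_eq_Ioc (c : ℕ → ℝ) (m : ℕ) :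
    moranDelta c m = ∏ i ∈ Finset.Ioc 0 m, c i := by
  unfold moranDelta
  apply Finset.prod_congr _ (fun _ _ => rfl)
  ext i; simp only [Finset.mem_Icc, Finset.mem_Ioc]; omega

lemma moranDelta_split (c : ℕ → ℝ) (k l : ℕ) :
    moranDelta c (k + l) = moranDelta c k * ∏ i ∈ Finset.Ioc k (k + l), c i := by
  rw [moranDelta_eq_Ioc, moranDelta_eq_Ioc,
    Finset.prod_Ioc_consecutive c (Nat.zero_le k) (Nat.le_add_right k l)]

lemma prod_c_pos (hc : ∀ k, 1 ≤ k → 0 < c k) (k l : ℕ) :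
    0 < ∏ i ∈ Finset.Ioc k (k + l), c i :=
  Finset.prod_pos fun i hi => hc i (by have := (Finset.mem_Ioc.mp hi).1; omega)

lemma log_prod_c (hc : ∀ k, 1 ≤ k → 0 < c k) (k l : ℕ) :
    Real.log (∏ i ∈ Finset.Ioc k (k + l), c i) = -Dg c l k := by
  rw [Real.log_prod (fun i hi => ne_of_gt (hc i (by have := (Finset.mem_Ioc.mp hi).1; omega)))]
  unfold Dg
  simp

lemma moranDelta_lt (hn : ∀ k, 1 ≤ k → 2 ≤ n k) (hc : ∀ k, 1 ≤ k → 0 < c k)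
    (hnc : ∀ k, 1 ≤ k → (n k : ℝ) * c k < 1) (k : ℕ) {l : ℕ} (hl : 1 ≤ l) :
    moranDelta c (k + l) < moranDelta c k := by
  rw [moranDelta_split]
  have hP1 : ∏ i ∈ Finset.Ioc k (k + l), c i < 1 := by
    have h2 : Real.log (∏ i ∈ Finset.Ioc k (k + l), c i) < 0 := by
      rw [log_prod_c hc]
      linarith [Dg_pos hn hc hnc hl k]
    exact (Real.log_neg_iff (prod_c_pos hc k l)).mp h2
  exact mul_lt_of_lt_one_right (moranDelta_pos hc k) hP1

lemma moranDelta_le_pow (hn : ∀ k, 1 ≤ k → 2 ≤ n k) (hc : ∀ k, 1 ≤ k → 0 < c k)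
    (hnc : ∀ k, 1 ≤ k → (n k : ℝ) * c k < 1) (k : ℕ) :
    moranDelta c k ≤ (1 / 2 : ℝ) ^ k := by
  unfold moranDelta
  calc ∏ i ∈ Finset.Icc 1 k, c i ≤ ∏ i ∈ Finset.Icc 1 k, (1 / 2 : ℝ) :=
      Finset.prod_le_prod (fun i hi => (hc i (Finset.mem_Icc.mp hi).1).le)
        (fun i hi => c_le_half hn hc hnc (Finset.mem_Icc.mp hi).1)
    _ = (1 / 2 : ℝ) ^ k := by rw [Finset.prod_const, Nat.card_Icc]; simp

end MoranAux

set_option maxHeartbeats 1000000 in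
open MoranAux in
/-- **Theorem 3.2.** If `E` is a homogeneous Moran set with `sup_k n_k < ∞`, then
`dim_L E ≤ liminf_{l→∞} inf_{k≥1} log(n_{k+1}⋯n_{k+l}) / (−log(c_{k+1}⋯c_{k+l}))`. -/
theorem lowerDim_homMoran_le (n : ℕ → ℕ) (c : ℕ → ℝ)
    (hn : ∀ k, 1 ≤ k → 2 ≤ n k) (hc : ∀ k, 1 ≤ k → 0 < c k)
    (hnc : ∀ k, 1 ≤ k → (n k : ℝ) * c k < 1)
    (S : HomMoranStructure n c) (E : Set ℝ) (hE : E = moranSet S)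
    (hsup : ∃ M : ℕ, ∀ k, 1 ≤ k → n k ≤ M) :
    lowerDim E ≤
      Filter.liminf (fun l : ℕ => ⨅ k : ℕ, moranRatio n c (k + 1) l) Filter.atTop := by
  classical
  obtain ⟨M, hM⟩ := hsup
  have hM2 : 2 ≤ M := le_trans (hn 1 le_rfl) (hM 1 le_rfl)
  have hlog2 : 0 < Real.log 2 := Real.log_pos (by norm_num)
  have hlogM : 0 < Real.log M :=
    Real.log_pos (by exact_mod_cast (by omega : (1:ℕ) < M))
  set f : ℕ → ℝ := fun l => ⨅ k : ℕ, moranRatio n c (k + 1) l with hfdef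
  have hratio_nonneg : ∀ k l, 0 ≤ moranRatio n c k l := fun k l => by
    rw [ratio_eq hn hc]
    exact div_nonneg (Lg_nonneg hn l k) (Dg_nonneg hn hc hnc l k)
  set Q := Real.log M / Real.log 2 with hQ
  have hQ0 : 0 ≤ Q := by rw [hQ]; positivity
  have hratio_le : ∀ k l, moranRatio n c k l ≤ max Q 0 := by
    intro k l
    rcases Nat.eq_zero_or_pos l with rfl | hl
    · rw [ratio_eq hn hc]
      have hz : Lg n 0 k = 0 := by unfold MoranAux.Lg; simp
      rw [hz, zero_div]
      exact le_max_right _ _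
    · rw [ratio_eq hn hc]
      refine le_trans ?_ (le_max_left _ _)
      have h1 := Lg_le hn hM l k
      have h2 := Dg_ge hn hc hnc l k
      have h3 := Dg_pos hn hc hnc hl k
      have hl0 : (0:ℝ) < l := by exact_mod_cast hl
      rw [hQ, div_le_div_iff₀ h3 hlog2]
      nlinarith [Lg_nonneg hn l k]
  have hbdd : ∀ l, BddBelow (Set.range fun k : ℕ => moranRatio n c (k + 1) l) := by
    intro l; exact ⟨0, by rintro y ⟨k, rfl⟩; exact hratio_nonneg _ _⟩
  have hf_nonneg : ∀ l, 0 ≤ f l := fun l => le_ciInf fun k => hratio_nonneg _ _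
  have hf_le : ∀ l, f l ≤ max Q 0 := fun l => (ciInf_le (hbdd l) 0).trans (hratio_le _ _)
  have hf_cobdd : Filter.IsCoboundedUnder (· ≥ ·) Filter.atTop f :=
    (Filter.isBoundedUnder_of ⟨max Q 0, hf_le⟩).isCoboundedUnder_ge
  have hT0 : 0 ≤ Filter.liminf f Filter.atTop :=
    Filter.le_liminf_of_le hf_cobdd (Filter.Eventually.of_forall hf_nonneg)
  rcases Set.eq_empty_or_nonempty E with hEe | ⟨x₀, hx₀⟩
  · unfold lowerDim
    rw [Real.sSup_of_not_bddAbove]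
    · exact hT0
    · rintro ⟨u, hu⟩
      have h2 := hu (Set.mem_setOf.mpr
        ⟨(by positivity : (0:ℝ) ≤ max u 0 + 1), 1, one_pos, 1, one_pos,
          fun r R _ _ _ x hx => by
            rw [hEe] at hx; exact absurd hx (Set.notMem_empty x)⟩)
      have h3 := le_max_left u 0
      linarith
  · unfold lowerDim
    apply Real.sSup_le _ hT0
    rintro s ⟨hs0, b, hb, C, hC, H⟩
    obtain ⟨K₀, hK₀⟩ := exists_pow_lt_of_lt_one hb (by norm_num : (1/2:ℝ) < 1)
    have hδb : ∀ k, K₀ ≤ k → moranDelta c k < b := fun k hk =>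
      lt_of_le_of_lt ((moranDelta_le_pow hn hc hnc k).trans
        (pow_le_pow_of_le_one (by norm_num) (by norm_num) hk)) hK₀
    set KK := max (Real.log 3 - Real.log C) 0 with hKKdef
    have hKK0 : 0 ≤ KK := le_max_right _ _
    have C1 : ∀ k l, 1 ≤ l → K₀ ≤ k → s * Dg c l k ≤ Lg n l k + KK := by
      intro k l hl hk
      have hPpos := prod_c_pos hc k l
      have h := H (moranDelta c (k + l)) (moranDelta c k) (moranDelta_pos hc _)
        (moranDelta_lt hn hc hnc k hl) (hδb k hk) x₀ hx₀
      rw [hE] at h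
      have h2 := h.trans (coveringNumber_le_bound hc S k l hl x₀)
      rw [← ENNReal.ofReal_natCast] at h2
      have h3 := (ENNReal.ofReal_le_ofReal_iff (by positivity)).mp h2
      have hratioP : moranDelta c k / moranDelta c (k + l)
          = (∏ i ∈ Finset.Ioc k (k + l), c i)⁻¹ := by
        rw [moranDelta_split]
        have hδpos := moranDelta_pos hc k
        field_simp
      rw [hratioP] at h3
      have hcast : ((3 * ∏ i ∈ Finset.Ioc k (k + l), n i : ℕ) : ℝ)
          = 3 * ∏ i ∈ Finset.Ioc k (k + l), (n i : ℝ) := by push_cast; ring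
      rw [hcast] at h3
      have hnprod_pos : 0 < ∏ i ∈ Finset.Ioc k (k + l), (n i : ℝ) :=
        Finset.prod_pos fun i hi => by
          have h5 : 1 ≤ i := by have := (Finset.mem_Ioc.mp hi).1; omega
          have := hn i h5; positivity
      have hinv : (0:ℝ) < (∏ i ∈ Finset.Ioc k (k + l), c i)⁻¹ := inv_pos.mpr hPpos
      have hlhs_pos : 0 < C * (∏ i ∈ Finset.Ioc k (k + l), c i)⁻¹ ^ s :=
        mul_pos hC (Real.rpow_pos_of_pos hinv s)
      have hlog := Real.log_le_log hlhs_pos h3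
      rw [Real.log_mul (ne_of_gt hC) (ne_of_gt (Real.rpow_pos_of_pos hinv s)),
        Real.log_rpow hinv, Real.log_inv,
        Real.log_mul (by norm_num) (ne_of_gt hnprod_pos),
        log_prod_c hc,
        Real.log_prod (fun i hi => by
          have h5 : 1 ≤ i := by have := (Finset.mem_Ioc.mp hi).1; omega
          have := hn i h5; positivity)] at hlog
      have hLgeq : (∑ i ∈ Finset.Ioc k (k + l), Real.log (n i)) = Lg n l k := rfl
      rw [hLgeq, neg_neg] at hlog
      have hKK1 : Real.log 3 - Real.log C ≤ KK := le_max_left _ _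
      linarith
    have hsB : s ≤ Q + KK / Real.log 2 := by
      have h := C1 K₀ 1 le_rfl le_rfl
      have h1 := Dg_ge hn hc hnc 1 K₀
      have h2 := Lg_le hn hM 1 K₀
      have h3 := Dg_pos hn hc hnc le_rfl K₀
      rw [Nat.cast_one, one_mul] at h1 h2
      have h4 : s ≤ (Lg n 1 K₀ + KK) / Dg c 1 K₀ := by
        rw [le_div_iff₀ h3]; linarith
      refine h4.trans ?_
      have h5 : Q + KK / Real.log 2 = (Real.log M + KK) / Real.log 2 := by
        rw [hQ]; ring
      rw [h5]
      apply div_le_div₀ (by positivity) (by linarith) hlog2 h1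
    set B := Q + KK / Real.log 2 with hBdef
    have hB0 : 0 ≤ B := add_nonneg hQ0 (div_nonneg hKK0 hlog2.le)
    set Dmax := Dg c K₀ 0 with hDmaxdef
    have hDmax0 : 0 ≤ Dmax := Dg_nonneg hn hc hnc _ _
    set W := B * Dmax + KK with hWdef
    have hW0 : 0 ≤ W := add_nonneg (mul_nonneg hB0 hDmax0) hKK0
    have C2 : ∀ k l, K₀ + 1 ≤ l → s * Dg c l k ≤ Lg n l k + W := by
      intro k l hl
      rcases le_or_gt K₀ k with hk | hk
      · have h := C1 k l (by omega) hk
        have h6 := mul_nonneg hB0 hDmax0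
        rw [hWdef]
        linarith
      · have h1 : k ≤ K₀ := hk.le
        have h2 : K₀ ≤ k + l := by omega
        have hsplitL := Lg_split (n := n) h1 h2
        have hsplitD := Dg_split (c := c) h1 h2
        have h3 := C1 K₀ (k + l - K₀) (by omega) le_rfl
        have h4 : s * Dg c (K₀ - k) k ≤ B * Dmax := by
          have h5 := Dg_le_Dmax hn hc hnc h1
          have h6 := Dg_nonneg hn hc hnc (K₀ - k) k
          nlinarith [hsB]
        have h7 := Lg_nonneg hn (K₀ - k) k
        rw [hsplitL, hsplitD, hWdef]
        have h8 : s * (Dg c (K₀ - k) k + Dg c (k + l - K₀) K₀)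
            = s * Dg c (K₀ - k) k + s * Dg c (k + l - K₀) K₀ := mul_add s _ _
        linarith
    set err : ℕ → ℝ := fun l => W / (((l : ℝ) - K₀) * Real.log 2) with herrdef
    have C3 : ∀ l, K₀ + 1 ≤ l → ∀ k : ℕ, s ≤ moranRatio n c (k + 1) l + err l := by
      intro l hl k
      have hD := Dg_pos hn hc hnc (by omega : 1 ≤ l) (k + 1)
      have hDge := Dg_ge hn hc hnc l (k + 1)
      have hlK : (0:ℝ) < (l:ℝ) - K₀ := by
        have : (K₀:ℝ) < (l:ℝ) := by exact_mod_cast (by omega : K₀ < l)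
        linarith
      have hWle : W ≤ err l * Dg c l (k + 1) := by
        rw [herrdef]
        have ha : ((l:ℝ) - K₀) * Real.log 2 ≤ (l:ℝ) * Real.log 2 := by
          nlinarith [Nat.cast_nonneg (α := ℝ) K₀]
        have hb2 : ((l:ℝ) - K₀) * Real.log 2 ≤ Dg c l (k + 1) := le_trans ha hDge
        calc W = W / (((l:ℝ) - K₀) * Real.log 2) * (((l:ℝ) - K₀) * Real.log 2) := by
              field_simp
          _ ≤ W / (((l:ℝ) - K₀) * Real.log 2) * Dg c l (k + 1) :=
              mul_le_mul_of_nonneg_left hb2 (by positivity)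
      have h := C2 (k + 1) l hl
      rw [ratio_eq hn hc]
      have h9 : s ≤ (Lg n l (k + 1) + err l * Dg c l (k + 1)) / Dg c l (k + 1) := by
        rw [le_div_iff₀ hD]; linarith
      refine h9.trans ?_
      rw [add_div, mul_div_assoc, div_self (ne_of_gt hD), mul_one]
    have h0 : Filter.Tendsto (fun l : ℕ => ((l:ℝ) + -(K₀:ℝ))) Filter.atTop Filter.atTop :=
      Filter.tendsto_atTop_add_const_right Filter.atTop (-(K₀:ℝ))
        (tendsto_natCast_atTop_atTop (R := ℝ))
    have h1 : Filter.Tendsto (fun l : ℕ => ((l:ℝ) - (K₀:ℝ)) * Real.log 2)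
        Filter.atTop Filter.atTop := by
      simp only [sub_eq_add_neg]
      exact h0.atTop_mul_const hlog2
    have herr_tendsto : Filter.Tendsto err Filter.atTop (nhds 0) := by
      rw [herrdef]
      exact Filter.Tendsto.div_atTop tendsto_const_nhds h1
    have hg_tendsto : Filter.Tendsto (fun l => s - err l) Filter.atTop (nhds s) := by
      have := Filter.Tendsto.const_sub s herr_tendsto
      simpa using this
    have hglim : Filter.liminf (fun l => s - err l) Filter.atTop = s := hg_tendsto.liminf_eq
    have hle : ∀ᶠ l in Filter.atTop, s - err l ≤ f l := by
      filter_upwards [Filter.eventually_ge_atTop (K₀ + 1)] with l hl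
      exact le_ciInf fun k => by have := C3 l hl k; linarith
    calc s = Filter.liminf (fun l => s - err l) Filter.atTop := hglim.symm
      _ ≤ Filter.liminf f Filter.atTop :=
          Filter.liminf_le_liminf hle (hg_tendsto.isBoundedUnder_ge) hf_cobdd
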